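/- arXiv:2410.04970 — 5 statements merged into one kernel-verified Lean document; each statement's English description precedes it below -/
import Mathlib

section
/- Let a₂ : [0,1] → ℝ be single-crossing at t* (a₂(t) ≤ 0 for t ≤ t*, a₂(t) ≥ 0 for t ≥ t*) with ∫₀¹ a₂(t) dt ≥ 0. Then for every monotone increasing nonnegative function a₁ : [0,1] → ℝ, ∫₀¹ a₁(t)·a₂(t) dt ≥ 0. -/
open MeasureTheory Set intervalIntegral

/- Since `g` changes sign at `c`, replacing the monotone weight `f` by its value `f c` can only
decrease `f * g` pointwise: where `g ≤ 0` we have `f ≤ f c`, and where `g ≥ 0` we have `f c ≤ f`. -/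

section SingleCrossing

variable {f g : ℝ → ℝ} {a b c : ℝ}

theorem mul_le_mul_of_single_crossing (hc : c ∈ Icc a b) (hf : MonotoneOn f (Icc a b))
    (hneg : ∀ t ∈ Icc a c, g t ≤ 0) (hpos : ∀ t ∈ Icc c b, 0 ≤ g t) {t : ℝ} (ht : t ∈ Icc a b) :
    f c * g t ≤ f t * g t := by
  rcases le_total t c with htc | hct
  · exact mul_le_mul_of_nonpos_right (hf ht hc htc) (hneg t ⟨ht.1, htc⟩)
  · exact mul_le_mul_of_nonneg_right (hf hc ht hct) (hpos t ⟨hct, ht.2⟩)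

theorem mul_integral_le_integral_mul_of_single_crossing (hc : c ∈ Icc a b)
    (hf : MonotoneOn f (Icc a b)) (hneg : ∀ t ∈ Icc a c, g t ≤ 0)
    (hpos : ∀ t ∈ Icc c b, 0 ≤ g t) (hg : IntervalIntegrable g volume a b)
    (hfg : IntervalIntegrable (fun t => f t * g t) volume a b) :
    f c * ∫ t in a..b, g t ≤ ∫ t in a..b, f t * g t := by
  rw [← intervalIntegral.integral_const_mul]
  exact integral_mono_on (hc.1.trans hc.2) (hg.const_mul _) hfg
    fun t ht => mul_le_mul_of_single_crossing hc hf hneg hpos ht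

end SingleCrossing

theorem single_crossing_nonneg_integral
    (a₁ a₂ : ℝ → ℝ) (tstar : ℝ) (hts : tstar ∈ Icc (0:ℝ) 1)
    (hneg : ∀ t ∈ Icc (0:ℝ) tstar, a₂ t ≤ 0)
    (hpos : ∀ t ∈ Icc tstar (1:ℝ), 0 ≤ a₂ t)
    (hint2 : IntervalIntegrable a₂ volume 0 1)
    (hintpos : (0:ℝ) ≤ ∫ t in (0:ℝ)..1, a₂ t)
    (hmono : MonotoneOn a₁ (Icc (0:ℝ) 1))
    (hnonneg : ∀ t ∈ Icc (0:ℝ) 1, 0 ≤ a₁ t)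
    (hint12 : IntervalIntegrable (fun t => a₁ t * a₂ t) volume 0 1) :
    (0:ℝ) ≤ ∫ t in (0:ℝ)..1, a₁ t * a₂ t :=
  (mul_nonneg (hnonneg tstar hts) hintpos).trans
    (mul_integral_le_integral_mul_of_single_crossing hts hmono hneg hpos hint2 hint12)
end

section
/- Let N ≥ 1 and let m, m' ∈ {1,…,N} with m > m'. Define H^N_j(t) = C(N,j) t^j (1-t)^{N-j}. Then there exists t* ∈ [0,1] such that H^N_m(t) − H^N_{m'}(t) ≤ 0 for all t ∈ [0,t*] and H^N_m(t) − H^N_{m'}(t) ≥ 0 for all t ∈ [t*,1]. (In fact t* = a point where C(N,m) t^{m}(1-t)^{-m} = C(N,m') t^{m'}(1-t)^{-m'}.) -/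
open Set

/-- `H N m t = C(N,m) t^m (1-t)^(N-m)`. -/
noncomputable def H (N m : ℕ) (t : ℝ) : ℝ := (N.choose m : ℝ) * t ^ m * (1 - t) ^ (N - m)

theorem binomial_diff_single_crossing (N m m' : ℕ) (hN : 1 ≤ N)
    (hm'1 : 1 ≤ m') (hmm' : m' < m) (hmN : m ≤ N) :
    ∃ tstar ∈ Icc (0:ℝ) 1,
      (∀ t ∈ Icc (0:ℝ) tstar, H N m t - H N m' t ≤ 0) ∧
      (∀ t ∈ Icc tstar (1:ℝ), 0 ≤ H N m t - H N m' t) := by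
  set k := m - m' with hk
  set g : ℝ → ℝ := fun t => (N.choose m : ℝ) * t ^ k - (N.choose m' : ℝ) * (1 - t) ^ k with hg
  have hkpos : 1 ≤ k := by omega
  have hcm : 0 < (N.choose m : ℝ) := by
    exact_mod_cast Nat.choose_pos hmN
  have hcm' : 0 < (N.choose m' : ℝ) := by
    exact_mod_cast Nat.choose_pos (le_trans hmm'.le hmN)
  have hcont : ContinuousOn g (Icc 0 1) := by fun_prop
  have hg0 : g 0 ≤ 0 := by
    simp only [hg]
    have : (0:ℝ) ^ k = 0 := zero_pow (by omega)
    simp [this]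
  have hg1 : (0:ℝ) ≤ g 1 := by
    simp only [hg]
    have : (1 - (1:ℝ)) ^ k = 0 := by
      simp [zero_pow (show k ≠ 0 by omega)]
    rw [this]; simp [zero_pow (show k ≠ 0 by omega)]
    
  have h0 : (0:ℝ) ∈ Icc (g 0) (g 1) := ⟨hg0, hg1⟩
  obtain ⟨tstar, hts, hgts⟩ := intermediate_value_Icc (by norm_num : (0:ℝ) ≤ 1) hcont h0
  -- key factorization
  have hfac : ∀ t : ℝ, H N m t - H N m' t = t ^ m' * (1 - t) ^ (N - m) * g t := by
    intro t
    have h1 : t ^ m = t ^ m' * t ^ k := by rw [← pow_add]; congr 1; omega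
    have h2 : (1 - t) ^ (N - m') = (1 - t) ^ (N - m) * (1 - t) ^ k := by
      rw [← pow_add]; congr 1; omega
    simp only [H, hg, h1, h2]; ring
  refine ⟨tstar, hts, ?_, ?_⟩
  · intro t ht
    rw [hfac]
    have ht0 : 0 ≤ t := ht.1
    have ht1 : t ≤ 1 := le_trans ht.2 hts.2
    have hgle : g t ≤ 0 := by
      rw [← hgts]
      simp only [hg]
      have h1 : t ^ k ≤ tstar ^ k := pow_le_pow_left₀ ht0 ht.2 k
      have h2 : (1 - tstar) ^ k ≤ (1 - t) ^ k :=
        pow_le_pow_left₀ (by linarith [hts.2]) (by linarith [ht.2]) k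
      nlinarith
    have : 0 ≤ t ^ m' * (1 - t) ^ (N - m) :=
      mul_nonneg (pow_nonneg ht0 _) (pow_nonneg (by linarith) _)
    exact mul_nonpos_of_nonneg_of_nonpos this hgle
  · intro t ht
    rw [hfac]
    have ht0 : 0 ≤ t := le_trans hts.1 ht.1
    have ht1 : t ≤ 1 := ht.2
    have hgle : 0 ≤ g t := by
      rw [← hgts]
      simp only [hg]
      have h1 : tstar ^ k ≤ t ^ k := pow_le_pow_left₀ hts.1 ht.1 k
      have h2 : (1 - t) ^ k ≤ (1 - tstar) ^ k :=
        pow_le_pow_left₀ (by linarith) (by linarith [ht.1]) k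
      nlinarith
    have : 0 ≤ t ^ m' * (1 - t) ^ (N - m) :=
      mul_nonneg (pow_nonneg ht0 _) (pow_nonneg (by linarith) _)
    exact mul_nonneg this hgle
end

section
/- Fix N ≥ 1, K ≥ 2, parameters θ₁ > θ₂ > … > θ_K > 0, and cumulative probabilities 0 = P₀ < P₁ < … < P_K = 1. For m ∈ {1,…,N} define α_m = (1/(N+1))·[1/θ_K − Σ_{k=1}^{K-1} (H^{N+1}_{≥ m}(P_k) + (N−m)·H^{N+1}_m(P_k))·(1/θ_{k+1} − 1/θ_k)], where H^{N+1}_j(t) = C(N+1,j) t^j (1-t)^{N+1-j} and H^{N+1}_{≥ m}(t) = Σ_{j=m}^{N+1} H^{N+1}_j(t). Then for every m' ∈ {1,…,N−1}, α_N − α_{m'} > 0. -/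
/-!
Writing `c m t` for the weight of prize `m` in `alpha`, `α_N - α_m` is `1/(N+1)` times
`∑ k, (c m (P k) - c N (P k)) (1/θ (k+1) - 1/θ k)`. The increments of `1/θ` are positive, and for
`m < N` the weight difference is `∑_{j=m}^{N-1} H^{N+1}_j + (N - m) H^{N+1}_m`, which is positive
since every Bernstein polynomial is positive on `(0, 1)` and each `P k` with `0 < k < K` lies there.
-/

open Set

/-- Upper tail `H^{N}_{≥ m}(t) = Σ_{j=m}^{N} H N j t`. -/
noncomputable def Hge (N m : ℕ) (t : ℝ) : ℝ := ∑ j ∈ Finset.Icc m N, H N j t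

/-- The coefficient of prize `m` in the expected-effort formula under linear costs. -/
noncomputable def alpha (N K : ℕ) (θ P : ℕ → ℝ) (m : ℕ) : ℝ :=
  (1 / (N + 1)) * (1 / θ K - ∑ k ∈ Finset.Icc 1 (K - 1),
    (Hge (N + 1) m (P k) + ((N : ℝ) - m) * H (N + 1) m (P k)) * (1 / θ (k + 1) - 1 / θ k))

noncomputable def prizeWeight (N m : ℕ) (t : ℝ) : ℝ :=
  Hge (N + 1) m t + ((N : ℝ) - m) * H (N + 1) m t

lemma H_pos {N m : ℕ} {t : ℝ} (hm : m ≤ N) (ht₀ : 0 < t) (ht₁ : t < 1) : 0 < H N m t := by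
  have hchoose : (0 : ℝ) < N.choose m := by exact_mod_cast Nat.choose_pos hm
  have h1t : 0 < 1 - t := sub_pos.2 ht₁
  unfold H
  positivity

lemma Hge_sub_Hge {N m n : ℕ} (hmn : m ≤ n) (hn : n ≤ N + 1) (t : ℝ) :
    Hge N m t - Hge N n t = ∑ j ∈ Finset.Ico m n, H N j t := by
  simp only [Hge, ← Finset.Ico_add_one_right_eq_Icc]
  rw [sub_eq_iff_eq_add, Finset.sum_Ico_consecutive _ hmn hn]

lemma prizeWeight_self_lt {N m : ℕ} (hm : m < N) {t : ℝ} (ht₀ : 0 < t) (ht₁ : t < 1) :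
    prizeWeight N N t < prizeWeight N m t := by
  have hgap : prizeWeight N m t - prizeWeight N N t
      = ∑ j ∈ Finset.Ico m N, H (N + 1) j t + ((N : ℝ) - m) * H (N + 1) m t := by
    rw [← Hge_sub_Hge (N := N + 1) hm.le (by omega), prizeWeight, prizeWeight, sub_self, zero_mul]
    ring
  have htail : 0 < ∑ j ∈ Finset.Ico m N, H (N + 1) j t :=
    Finset.sum_pos (fun j hj ↦ H_pos (by grind) ht₀ ht₁)
      ⟨m, Finset.mem_Ico.2 ⟨le_rfl, hm⟩⟩
  have hextra : 0 ≤ ((N : ℝ) - m) * H (N + 1) m t :=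
    mul_nonneg (sub_nonneg.2 (by exact_mod_cast hm.le)) (H_pos (by omega) ht₀ ht₁).le
  linarith

lemma alpha_sub_alpha (N K : ℕ) (θ P : ℕ → ℝ) (m n : ℕ) :
    alpha N K θ P n - alpha N K θ P m = 1 / (N + 1) * ∑ k ∈ Finset.Icc 1 (K - 1),
      (prizeWeight N m (P k) - prizeWeight N n (P k)) * (1 / θ (k + 1) - 1 / θ k) := by
  simp only [alpha, prizeWeight, sub_mul, Finset.sum_sub_distrib]
  ring

theorem winner_takes_all_optimal_general (N K : ℕ) (hN : 1 ≤ N) (hK : 2 ≤ K)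
    (θ P : ℕ → ℝ)
    (hθdec : ∀ k, 1 ≤ k → k < K → θ (k + 1) < θ k)
    (hθpos : 0 < θ K)
    (hP0 : P 0 = 0) (hPK : P K = 1)
    (hPmono : ∀ k, k < K → P k < P (k + 1))
    (m' : ℕ) (hm' : m' ≤ N - 1) :
    0 < alpha N K θ P N - alpha N K θ P m' := by
  have hP : StrictMonoOn P (Iic K) := strictMonoOn_Iic_of_lt_succ hPmono
  have hθ : StrictAntiOn θ (Icc 1 K) :=
    strictAntiOn_of_succ_lt ordConnected_Icc fun k _ hk hk' ↦ hθdec k hk.1 hk'.2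
  rw [alpha_sub_alpha]
  refine mul_pos (by positivity)
    (Finset.sum_pos (fun k hk ↦ ?_) ⟨1, Finset.mem_Icc.2 ⟨le_rfl, by omega⟩⟩)
  obtain ⟨hk₁, hkK⟩ := Finset.mem_Icc.1 hk
  have hPk₀ : 0 < P k := hP0 ▸ hP (by simp) (mem_Iic.2 (by omega)) (by omega)
  have hPk₁ : P k < 1 := hPK ▸ hP (mem_Iic.2 (by omega)) (by simp) (by omega)
  have hθk : 0 < θ (k + 1) :=
    hθpos.trans_le (hθ.antitoneOn ⟨by omega, by omega⟩ ⟨by omega, le_rfl⟩ (by omega))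
  exact mul_pos (sub_pos.2 (prizeWeight_self_lt (by omega) hPk₀ hPk₁))
    (sub_pos.2 (one_div_lt_one_div_of_lt hθk (hθdec k hk₁ (by omega))))

theorem winner_takes_all_optimal (N K : ℕ) (hN : 1 ≤ N) (hK : 2 ≤ K)
    (θ P : ℕ → ℝ)
    (hθdec : ∀ k, 1 ≤ k → k < K → θ (k + 1) < θ k)
    (hθpos : 0 < θ K)
    (hP0 : P 0 = 0) (hPK : P K = 1)
    (hPmono : ∀ k, k < K → P k < P (k + 1))
    (m' : ℕ) (hm'1 : 1 ≤ m') (hm' : m' ≤ N - 1) :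
    0 < alpha N K θ P N - alpha N K θ P m' :=
  winner_takes_all_optimal_general N K hN hK θ P hθdec hθpos hP0 hPK hPmono m' hm'
end

section
/- Let N ≥ 2, K = 2, θ₁ > θ₂ > 0, and P₁ ∈ (0,1). With α_m defined as α_m = (1/(N+1))·[1/θ₂ − (H^{N+1}_{≥ m}(P₁) + (N−m)·H^{N+1}_m(P₁))·(1/θ₂ − 1/θ₁)], for every m ∈ {1,…,N−1}: α_{m+1} − α_m ≥ 0 if and only if P₁ ≤ (m+1)/N. -/
open Set

/-- The coefficient of prize `m` in the two-type (`K = 2`) linear-cost environment. -/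
noncomputable def alphaTwo (N : ℕ) (θ₁ θ₂ P₁ : ℝ) (m : ℕ) : ℝ :=
  (1 / (N + 1)) * (1 / θ₂ -
    (Hge (N + 1) m P₁ + ((N : ℝ) - m) * H (N + 1) m P₁) * (1 / θ₂ - 1 / θ₁))

/-!
Peeling the term `H_m` off the tail `H_{≥ m}` gives
`α_{m+1} - α_m = c · ((N+1-m) H_m - (N-m-1) H_{m+1})` with `c = (1/θ₂ - 1/θ₁)/(N+1) > 0`.
The ratio of consecutive Bernstein terms, `(m+1)(1-t) H_{m+1} = (N+1-m) t H_m`, turns the bracket,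
multiplied by `(m+1)(1-t)`, into `(N+1-m) H_m ((m+1) - N t)`, so its sign is that of `(m+1) - N P₁`.
-/

lemma H_pos_s8 {n m : ℕ} (h : m ≤ n) {t : ℝ} (ht : t ∈ Ioo (0 : ℝ) 1) : 0 < H n m t := by
  have hchoose : (0 : ℝ) < n.choose m := by exact_mod_cast Nat.choose_pos h
  obtain ⟨ht0, ht1⟩ := ht
  have h1t : 0 < 1 - t := sub_pos.2 ht1
  unfold H
  positivity

lemma Hge_eq_H_add_Hge_succ {n m : ℕ} (h : m ≤ n) (t : ℝ) :
    Hge n m t = H n m t + Hge n (m + 1) t := by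
  unfold Hge
  rw [← Finset.insert_Icc_add_one_left_eq_Icc h, Finset.sum_insert (by simp)]

lemma succ_mul_one_sub_mul_H_succ (n m : ℕ) (t : ℝ) :
    ((m : ℝ) + 1) * (1 - t) * H n (m + 1) t = ((n : ℝ) - m) * t * H n m t := by
  rcases lt_or_ge m n with hmn | hnm
  · obtain ⟨k, rfl⟩ : ∃ k, n = m + 1 + k := ⟨n - (m + 1), by omega⟩
    have hchoose : ((m + 1 + k).choose (m + 1) : ℝ) * (m + 1) = (m + 1 + k).choose m * (k + 1) := by
      have := Nat.choose_succ_right_eq (m + 1 + k) m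
      rw [show m + 1 + k - m = k + 1 by omega] at this
      exact_mod_cast this
    unfold H
    rw [show m + 1 + k - (m + 1) = k by omega, show m + 1 + k - m = k + 1 by omega]
    push_cast
    linear_combination t ^ (m + 1) * (1 - t) ^ (k + 1) * hchoose
  · have hsucc : H n (m + 1) t = 0 := by
      simp [H, Nat.choose_eq_zero_of_lt (Nat.lt_succ_of_le hnm)]
    rcases hnm.eq_or_lt with rfl | hlt
    · simp [hsucc]
    · rw [hsucc, H, Nat.choose_eq_zero_of_lt hlt]
      simp

lemma alphaTwo_succ_sub {N m : ℕ} (hm : m ≤ N + 1) (θ₁ θ₂ t : ℝ) :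
    alphaTwo N θ₁ θ₂ t (m + 1) - alphaTwo N θ₁ θ₂ t m =
      (1 / θ₂ - 1 / θ₁) / (N + 1) *
        (((N : ℝ) + 1 - m) * H (N + 1) m t - ((N : ℝ) - m - 1) * H (N + 1) (m + 1) t) := by
  unfold alphaTwo
  rw [Hge_eq_H_add_Hge_succ hm]
  push_cast
  ring

lemma succ_mul_one_sub_mul_transfer (N m : ℕ) (t : ℝ) :
    ((m : ℝ) + 1) * (1 - t) *
        (((N : ℝ) + 1 - m) * H (N + 1) m t - ((N : ℝ) - m - 1) * H (N + 1) (m + 1) t) =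
      ((N : ℝ) + 1 - m) * H (N + 1) m t * ((m + 1) - N * t) := by
  have := succ_mul_one_sub_mul_H_succ (N + 1) m t
  push_cast at this
  linear_combination (-((N : ℝ) - m - 1)) * this

theorem two_type_adjacent_transfer_general (N : ℕ) (hN : 2 ≤ N)
    (θ₁ θ₂ P₁ : ℝ) (hθ : θ₂ < θ₁) (hθ₂ : 0 < θ₂) (hP₁ : P₁ ∈ Ioo (0:ℝ) 1)
    (m : ℕ) (hm : m ≤ N - 1) :
    0 ≤ alphaTwo N θ₁ θ₂ P₁ (m + 1) - alphaTwo N θ₁ θ₂ P₁ m ↔ P₁ ≤ (m + 1) / N := by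
  have hc : 0 < (1 / θ₂ - 1 / θ₁) / (N + 1) :=
    div_pos (sub_pos.2 (one_div_lt_one_div_of_lt hθ₂ hθ)) (by positivity)
  have hweight : 0 < ((m : ℝ) + 1) * (1 - P₁) := mul_pos (by positivity) (sub_pos.2 hP₁.2)
  have hHm : 0 < ((N : ℝ) + 1 - m) * H (N + 1) m P₁ := by
    have : (m : ℝ) ≤ N := by exact_mod_cast (show m ≤ N by omega)
    exact mul_pos (by linarith) (H_pos_s8 (by omega) hP₁)
  have hNpos : (0 : ℝ) < N := by exact_mod_cast (show 0 < N by omega)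
  rw [alphaTwo_succ_sub (by omega), mul_nonneg_iff_of_pos_left hc,
    ← mul_nonneg_iff_of_pos_left hweight, succ_mul_one_sub_mul_transfer,
    mul_nonneg_iff_of_pos_left hHm, le_div_iff₀ hNpos, sub_nonneg, mul_comm]

theorem two_type_adjacent_transfer (N : ℕ) (hN : 2 ≤ N)
    (θ₁ θ₂ P₁ : ℝ) (hθ : θ₂ < θ₁) (hθ₂ : 0 < θ₂) (hP₁ : P₁ ∈ Ioo (0:ℝ) 1)
    (m : ℕ) (hm1 : 1 ≤ m) (hm : m ≤ N - 1) :
    0 ≤ alphaTwo N θ₁ θ₂ P₁ (m + 1) - alphaTwo N θ₁ θ₂ P₁ m ↔ P₁ ≤ (m + 1) / N :=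
  two_type_adjacent_transfer_general N hN θ₁ θ₂ P₁ hθ hθ₂ hP₁ m hm
end

section
/- Let f, h : [0,1] → ℝ with h continuous, h(0) = 0, h(1) ≥ 0, and suppose h is differentiable except at finitely many points, with sign of h' equal (where defined) to the sign of the derivative of H^N_m − H^N_{m'} (m > m' ≥ 1), which is: negative then positive then negative on (0,1) when m < N, and negative then positive when m = N. Then there exists t* ∈ [0,1] such that h(t) ≤ 0 on [0,t*] and h(t) ≥ 0 on [t*,1]. -/
/-!
Since `t (1 - t) H_j'(t) = H_j(t) (j - N t)`, on `(0, 1)` the derivative of `H_m - H_{m'}` has the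
sign of `D(t) = H_m(t) (m - N t) - H_{m'}(t) (m' - N t)`. The set where `D > 0` is an interval: it
contains `(m'/N, m/N)` outright, and since `H_m / H_{m'}` increases, positivity of `D` propagates to
the right below `m'/N` and to the left above `m/N`. So `h` decreases, increases, then decreases, and
as `h 0 = 0 ≤ h 1`, a zero of `h` on the increasing stretch is the crossing point.
-/

open Set

namespace Real

theorem sign_nonpos_iff {r : ℝ} : sign r ≤ 0 ↔ r ≤ 0 := by
  rcases lt_trichotomy r 0 with hr | rfl | hr
  · simp [sign_of_neg hr, hr.le]
  · simp [sign_zero]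
  · simp [sign_of_pos hr, hr.not_ge]

theorem sign_nonneg_iff {r : ℝ} : 0 ≤ sign r ↔ 0 ≤ r := by
  rw [← neg_nonpos, ← sign_neg, sign_nonpos_iff, neg_nonpos]

theorem sign_mul_of_pos {c : ℝ} (hc : 0 < c) (r : ℝ) : sign (c * r) = sign r := by
  rcases lt_trichotomy r 0 with hr | rfl | hr
  · rw [sign_of_neg hr, sign_of_neg (mul_neg_of_pos_of_neg hc hr)]
  · rw [mul_zero]
  · rw [sign_of_pos hr, sign_of_pos (mul_pos hc hr)]

end Real

theorem monotoneOn_Icc_of_deriv_nonneg_off_finset {f : ℝ → ℝ} {S : Finset ℝ} {a b : ℝ}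
    (hf : ContinuousOn f (Icc a b))
    (hdiff : ∀ t ∈ Ioo a b, t ∉ S → DifferentiableAt ℝ f t)
    (hderiv : ∀ t ∈ Ioo a b, t ∉ S → 0 ≤ deriv f t) :
    MonotoneOn f (Icc a b) := by
  induction S using Finset.induction_on generalizing a b with
  | empty =>
    rw [← interior_Icc] at hdiff hderiv
    exact monotoneOn_of_deriv_nonneg (convex_Icc a b) hf
      (fun t ht => (hdiff t ht (Finset.notMem_empty t)).differentiableWithinAt)
      (fun t ht => hderiv t ht (Finset.notMem_empty t))
  | @insert s S _ ih =>
    have restrict : ∀ {u v : ℝ}, a ≤ u → v ≤ b → s ∉ Ioo u v → MonotoneOn f (Icc u v) := by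
      intro u v hau hvb hs
      have hsub : Ioo u v ⊆ Ioo a b := Ioo_subset_Ioo hau hvb
      have hnotin : ∀ t ∈ Ioo u v, t ∉ S → t ∉ insert s S := fun t ht htS hts =>
        (Finset.mem_insert.1 hts).elim (fun hts => hs (hts ▸ ht)) htS
      exact ih (hf.mono (Icc_subset_Icc hau hvb))
        (fun t ht htS => hdiff t (hsub ht) (hnotin t ht htS))
        (fun t ht htS => hderiv t (hsub ht) (hnotin t ht htS))
    by_cases hs : s ∈ Ioo a b
    · rw [← Icc_union_Icc_eq_Icc hs.1.le hs.2.le]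
      exact (restrict le_rfl hs.2.le (fun h => lt_irrefl s h.2)).union_right
        (restrict hs.1.le le_rfl (fun h => lt_irrefl s h.1))
        (isGreatest_Icc hs.1.le) (isLeast_Icc hs.2.le)
    · exact restrict le_rfl le_rfl hs

theorem antitoneOn_Icc_of_deriv_nonpos_off_finset {f : ℝ → ℝ} {S : Finset ℝ} {a b : ℝ}
    (hf : ContinuousOn f (Icc a b))
    (hdiff : ∀ t ∈ Ioo a b, t ∉ S → DifferentiableAt ℝ f t)
    (hderiv : ∀ t ∈ Ioo a b, t ∉ S → deriv f t ≤ 0) :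
    AntitoneOn f (Icc a b) := by
  have hneg : MonotoneOn (fun x => -f x) (Icc a b) :=
    monotoneOn_Icc_of_deriv_nonneg_off_finset hf.neg (fun t ht htS => (hdiff t ht htS).neg)
      (fun t ht htS => by rw [deriv.fun_neg]; exact neg_nonneg.2 (hderiv t ht htS))
  simpa using hneg.neg

theorem Set.OrdConnected.exists_Ioo_subset_subset_Icc {s : Set ℝ} (hs : s.OrdConnected)
    {u v : ℝ} (huv : u ≤ v) (hsuv : s ⊆ Icc u v) :
    ∃ a b, u ≤ a ∧ a ≤ b ∧ b ≤ v ∧ Ioo a b ⊆ s ∧ s ⊆ Icc a b := by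
  rcases s.eq_empty_or_nonempty with rfl | hne
  · exact ⟨u, u, le_rfl, le_rfl, huv, by simp, empty_subset _⟩
  have hbdd : BddBelow s := ⟨u, fun x hx => (hsuv hx).1⟩
  have hbdd' : BddAbove s := ⟨v, fun x hx => (hsuv hx).2⟩
  exact ⟨sInf s, sSup s, le_csInf hne fun x hx => (hsuv hx).1, csInf_le_csSup hne hbdd hbdd',
    csSup_le hne fun x hx => (hsuv hx).2,
    IsConnected.Ioo_csInf_csSup_subset ⟨hne, hs.isPreconnected⟩ hbdd hbdd',
    subset_Icc_csInf_csSup hbdd hbdd'⟩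

theorem exists_crossing_of_antitoneOn_monotoneOn_antitoneOn {f : ℝ → ℝ} {u a b v : ℝ}
    (hua : u ≤ a) (hab : a ≤ b) (hbv : b ≤ v) (hf : ContinuousOn f (Icc a b))
    (h₁ : AntitoneOn f (Icc u a)) (h₂ : MonotoneOn f (Icc a b)) (h₃ : AntitoneOn f (Icc b v))
    (hu : f u ≤ 0) (hv : 0 ≤ f v) :
    ∃ c ∈ Icc a b, (∀ t ∈ Icc u c, f t ≤ 0) ∧ ∀ t ∈ Icc c v, 0 ≤ f t := by
  have ha : f a ≤ 0 := (h₁ ⟨le_rfl, hua⟩ ⟨hua, le_rfl⟩ hua).trans hu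
  have hb : 0 ≤ f b := hv.trans (h₃ ⟨le_rfl, hbv⟩ ⟨hbv, le_rfl⟩ hbv)
  obtain ⟨c, hc, hfc⟩ := intermediate_value_Icc hab hf ⟨ha, hb⟩
  refine ⟨c, hc, fun t ht => ?_, fun t ht => ?_⟩
  · rcases le_total t a with hta | hat
    · exact (h₁ ⟨le_rfl, hua⟩ ⟨ht.1, hta⟩ ht.1).trans hu
    · exact hfc ▸ h₂ ⟨hat, ht.2.trans hc.2⟩ hc ht.2
  · rcases le_total t b with htb | hbt
    · exact hfc ▸ h₂ hc ⟨hc.1.trans ht.1, htb⟩ ht.1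
    · exact hv.trans (h₃ ⟨hbt, ht.2⟩ ⟨hbv, le_rfl⟩ ht.2)

theorem exists_single_crossing_of_sign_deriv_eq {f d : ℝ → ℝ} {S : Finset ℝ} {u v : ℝ}
    (huv : u ≤ v) (hf : ContinuousOn f (Icc u v))
    (hdiff : ∀ t ∈ Ioo u v, t ∉ S → DifferentiableAt ℝ f t)
    (hsign : ∀ t ∈ Ioo u v, t ∉ S → Real.sign (deriv f t) = Real.sign (d t))
    (hd : {t ∈ Ioo u v | 0 < d t}.OrdConnected) (hu : f u ≤ 0) (hv : 0 ≤ f v) :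
    ∃ c ∈ Icc u v, (∀ t ∈ Icc u c, f t ≤ 0) ∧ ∀ t ∈ Icc c v, 0 ≤ f t := by
  obtain ⟨a, b, hua, hab, hbv, hpos, hsupp⟩ :=
    hd.exists_Ioo_subset_subset_Icc huv fun t ht => Ioo_subset_Icc_self ht.1
  have hav : a ≤ v := hab.trans hbv
  have hub : u ≤ b := hua.trans hab
  have hcont : ∀ {x y}, u ≤ x → y ≤ v → ContinuousOn f (Icc x y) :=
    fun hx hy => hf.mono (Icc_subset_Icc hx hy)
  have hdiff' : ∀ {x y}, u ≤ x → y ≤ v → ∀ t ∈ Ioo x y, t ∉ S → DifferentiableAt ℝ f t :=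
    fun hx hy t ht => hdiff t (Ioo_subset_Ioo hx hy ht)
  have hdown : ∀ t ∈ Ioo u v, t ∉ S → t ∉ Icc a b → deriv f t ≤ 0 := by
    intro t ht htS htab
    rw [← Real.sign_nonpos_iff, hsign t ht htS, Real.sign_nonpos_iff]
    exact not_lt.1 fun hdt => htab (hsupp ⟨ht, hdt⟩)
  have hup : ∀ t ∈ Ioo a b, t ∉ S → 0 ≤ deriv f t := by
    intro t ht htS
    rw [← Real.sign_nonneg_iff, hsign t (Ioo_subset_Ioo hua hbv ht) htS, Real.sign_nonneg_iff]
    exact (hpos ht).2.le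
  obtain ⟨c, hc, hle, hge⟩ := exists_crossing_of_antitoneOn_monotoneOn_antitoneOn hua hab hbv
    (hcont hua hbv)
    (antitoneOn_Icc_of_deriv_nonpos_off_finset (hcont le_rfl hav) (hdiff' le_rfl hav)
      fun t ht htS => hdown t ⟨ht.1, ht.2.trans_le hav⟩ htS fun h => ht.2.not_ge h.1)
    (monotoneOn_Icc_of_deriv_nonneg_off_finset (hcont hua hbv) (hdiff' hua hbv) hup)
    (antitoneOn_Icc_of_deriv_nonpos_off_finset (hcont hub le_rfl) (hdiff' hub le_rfl)
      fun t ht htS => hdown t ⟨hub.trans_lt ht.1, ht.2⟩ htS fun h => ht.1.not_ge h.2)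
    hu hv
  exact ⟨c, Icc_subset_Icc hua hbv hc, hle, hge⟩

theorem H_pos_s13 {N j : ℕ} (hj : j ≤ N) {t : ℝ} (ht : t ∈ Ioo 0 1) : 0 < H N j t :=
  mul_pos (mul_pos (by exact_mod_cast Nat.choose_pos hj) (pow_pos ht.1 _))
    (pow_pos (sub_pos.2 ht.2) _)

theorem H_mul_H_le {N j j' : ℕ} (hj' : j' ≤ j) (hj : j ≤ N) {s t : ℝ}
    (hs : 0 ≤ s) (hst : s ≤ t) (ht : t ≤ 1) :
    H N j' t * H N j s ≤ H N j t * H N j' s := by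
  obtain ⟨k, rfl⟩ := Nat.exists_eq_add_of_le hj'
  have hk : N - j' = N - (j' + k) + k := by omega
  have hpow : s ^ k * (1 - t) ^ k ≤ t ^ k * (1 - s) ^ k := by
    rw [← mul_pow, ← mul_pow]
    exact pow_le_pow_left₀ (mul_nonneg hs (by linarith)) (by nlinarith) k
  set C : ℝ := N.choose j' * N.choose (j' + k) * s ^ j' * t ^ j' *
      (1 - s) ^ (N - (j' + k)) * (1 - t) ^ (N - (j' + k))
  have hC : 0 ≤ C := by
    have : 0 ≤ 1 - s := by linarith
    have : 0 ≤ 1 - t := by linarith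
    have : 0 ≤ t := hs.trans hst
    positivity
  calc H N j' t * H N (j' + k) s = C * (s ^ k * (1 - t) ^ k) := by
        simp only [C, H, hk, pow_add]; ring
    _ ≤ C * (t ^ k * (1 - s) ^ k) := mul_le_mul_of_nonneg_left hpow hC
    _ = H N (j' + k) t * H N j' s := by simp only [C, H, hk, pow_add]; ring

theorem natCast_mul_mul_pow_sub_one (n : ℕ) (x : ℝ) :
    (n : ℝ) * (x * x ^ (n - 1)) = n * x ^ n := by
  rcases n.eq_zero_or_pos with rfl | hn
  · simp
  · rw [mul_pow_sub_one hn.ne']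

theorem hasDerivAt_H (N j : ℕ) (t : ℝ) :
    HasDerivAt (H N j) (N.choose j * (j * t ^ (j - 1) * (1 - t) ^ (N - j)
      - (N - j : ℕ) * t ^ j * (1 - t) ^ (N - j - 1))) t := by
  refine ((((hasDerivAt_pow j t).const_mul (N.choose j : ℝ)).fun_mul
    (((hasDerivAt_id t).const_sub 1).fun_pow (N - j)))).congr_deriv ?_
  simp only [id]; ring

theorem mul_deriv_H {N j : ℕ} (hj : j ≤ N) (t : ℝ) :
    t * (1 - t) * deriv (H N j) t = H N j t * (j - N * t) := by
  have e₁ := natCast_mul_mul_pow_sub_one j t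
  have e₂ := natCast_mul_mul_pow_sub_one (N - j) (1 - t)
  rw [(hasDerivAt_H N j t).deriv, H]
  rw [Nat.cast_sub hj] at e₂ ⊢
  linear_combination (N.choose j * (1 - t) ^ (N - j) * (1 - t)) * e₁
    - (N.choose j * t ^ j * t) * e₂

noncomputable def scaledGapDeriv (N m m' : ℕ) (t : ℝ) : ℝ :=
  H N m t * (m - N * t) - H N m' t * (m' - N * t)

theorem mul_deriv_H_sub_H {N m m' : ℕ} (hm : m ≤ N) (hm' : m' ≤ N) (t : ℝ) :
    t * (1 - t) * deriv (fun s => H N m s - H N m' s) t = scaledGapDeriv N m m' t := by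
  rw [deriv_fun_sub (hasDerivAt_H N m t).differentiableAt (hasDerivAt_H N m' t).differentiableAt,
    mul_sub, mul_deriv_H hm, mul_deriv_H hm', scaledGapDeriv]

theorem sign_deriv_H_sub_H {N m m' : ℕ} (hm : m ≤ N) (hm' : m' ≤ N) {t : ℝ} (ht : t ∈ Ioo 0 1) :
    Real.sign (deriv (fun s => H N m s - H N m' s) t) = Real.sign (scaledGapDeriv N m m' t) := by
  rw [← mul_deriv_H_sub_H hm hm', Real.sign_mul_of_pos (mul_pos ht.1 (sub_pos.2 ht.2))]

-- In ratio form: from `Q β < P α`, `P / Q ≤ P' / Q'` and `α / β ≤ α' / β'` follows `Q' β' < P' α'`.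
theorem mul_lt_mul_of_cross_mul_le {P Q α β P' Q' α' β' : ℝ} (hα : 0 ≤ α) (hQ : 0 ≤ Q)
    (hβ : 0 ≤ β) (hβ' : 0 ≤ β') (hP' : 0 < P') (hα' : 0 < α') (h : Q * β < P * α)
    (hPQ : Q' * P ≤ P' * Q) (hαβ : β' * α ≤ α' * β) : Q' * β' < P' * α' := by
  have hPα : 0 < P * α := (mul_nonneg hQ hβ).trans_lt h
  refine lt_of_mul_lt_mul_right ?_ hPα.le
  calc Q' * β' * (P * α) = (Q' * P) * (β' * α) := by ring
    _ ≤ (P' * Q) * (α' * β) := mul_le_mul hPQ hαβ (mul_nonneg hβ' hα) (mul_nonneg hP'.le hQ)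
    _ = P' * α' * (Q * β) := by ring
    _ < P' * α' * (P * α) := mul_lt_mul_of_pos_left h (mul_pos hP' hα')

section scaledGapDeriv

variable {N m m' : ℕ} {s t : ℝ}

theorem scaledGapDeriv_pos_of_pos_of_le (hmm' : m' < m) (hmN : m ≤ N) (hs : 0 < s)
    (hst : s ≤ t) (ht : t < 1) (htm' : N * t ≤ m') (h : 0 < scaledGapDeriv N m m' s) :
    0 < scaledGapDeriv N m m' t := by
  have hm'm : (m' : ℝ) < m := by exact_mod_cast hmm'
  have hNst : (N : ℝ) * s ≤ N * t := mul_le_mul_of_nonneg_left hst N.cast_nonneg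
  have hgap : 0 ≤ (N : ℝ) * (m - m') * (t - s) :=
    mul_nonneg (mul_nonneg N.cast_nonneg (by linarith)) (by linarith)
  rw [scaledGapDeriv, sub_pos] at h ⊢
  exact mul_lt_mul_of_cross_mul_le (by linarith)
    (H_pos_s13 (hmm'.le.trans hmN) ⟨hs, hst.trans_lt ht⟩).le (by linarith) (by linarith)
    (H_pos_s13 hmN ⟨hs.trans_le hst, ht⟩) (by linarith) h
    (H_mul_H_le hmm'.le hmN hs.le hst ht.le) (by nlinarith)

theorem scaledGapDeriv_pos_of_pos_of_ge (hmm' : m' < m) (hmN : m ≤ N) (hs : 0 < s)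
    (hst : s ≤ t) (ht : t < 1) (hsm : m ≤ N * s) (h : 0 < scaledGapDeriv N m m' t) :
    0 < scaledGapDeriv N m m' s := by
  have hm'm : (m' : ℝ) < m := by exact_mod_cast hmm'
  have hNst : (N : ℝ) * s ≤ N * t := mul_le_mul_of_nonneg_left hst N.cast_nonneg
  have hgap : 0 ≤ (N : ℝ) * (m - m') * (t - s) :=
    mul_nonneg (mul_nonneg N.cast_nonneg (by linarith)) (by linarith)
  have hratio : H N m s * H N m' t ≤ H N m' s * H N m t := by
    rw [mul_comm, mul_comm (H N m' s)]
    exact H_mul_H_le hmm'.le hmN hs.le hst ht.le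
  rw [scaledGapDeriv, sub_pos] at h ⊢
  have key := mul_lt_mul_of_cross_mul_le (α := N * t - m') (β := N * t - m) (α' := N * s - m')
    (β' := N * s - m) (by linarith) (H_pos_s13 hmN ⟨hs.trans_le hst, ht⟩).le
    (by linarith) (by linarith) (H_pos_s13 (hmm'.le.trans hmN) ⟨hs, hst.trans_lt ht⟩) (by linarith)
    (by linarith) hratio (by nlinarith)
  linarith

theorem ordConnected_setOf_scaledGapDeriv_pos (hmm' : m' < m) (hmN : m ≤ N) :
    {t ∈ Ioo 0 1 | 0 < scaledGapDeriv N m m' t}.OrdConnected := by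
  refine ordConnected_of_Ioo ?_
  rintro s ⟨hs, hDs⟩ u ⟨hu, hDu⟩ - t ⟨hst, htu⟩
  have ht : t ∈ Ioo 0 1 := ⟨hs.1.trans hst, htu.trans hu.2⟩
  refine ⟨ht, ?_⟩
  rcases le_or_gt (N * t : ℝ) m' with htm' | htm'
  · exact scaledGapDeriv_pos_of_pos_of_le hmm' hmN hs.1 hst.le ht.2 htm' hDs
  rcases le_or_gt (m : ℝ) (N * t) with htm | htm
  · exact scaledGapDeriv_pos_of_pos_of_ge hmm' hmN ht.1 htu.le hu.2 htm hDu
  have h₁ := mul_pos (H_pos_s13 hmN ht) (sub_pos.2 htm)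
  have h₂ := mul_pos (H_pos_s13 (hmm'.le.trans hmN) ht) (sub_pos.2 htm')
  rw [scaledGapDeriv]
  linarith

end scaledGapDeriv

theorem down_up_down_single_crossing_general (N m m' : ℕ)
    (hmm' : m' < m) (hmN : m ≤ N)
    (h : ℝ → ℝ) (S : Finset ℝ)
    (hcont : ContinuousOn h (Icc (0:ℝ) 1))
    (h0 : h 0 = 0) (h1 : 0 ≤ h 1)
    (hdiff : ∀ t ∈ Ioo (0:ℝ) 1, t ∉ S → DifferentiableAt ℝ h t)
    (hsign : ∀ t ∈ Ioo (0:ℝ) 1, t ∉ S →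
      Real.sign (deriv h t) =
        Real.sign (deriv (fun s => H N m s - H N m' s) t)) :
    ∃ tstar ∈ Icc (0:ℝ) 1,
      (∀ t ∈ Icc (0:ℝ) tstar, h t ≤ 0) ∧ (∀ t ∈ Icc tstar (1:ℝ), 0 ≤ h t) :=
  exists_single_crossing_of_sign_deriv_eq zero_le_one hcont hdiff
    (fun t ht htS => (hsign t ht htS).trans (sign_deriv_H_sub_H hmN (hmm'.le.trans hmN) ht))
    (ordConnected_setOf_scaledGapDeriv_pos hmm' hmN) h0.le h1

theorem down_up_down_single_crossing (N m m' : ℕ) (hN : 1 ≤ N)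
    (hm'1 : 1 ≤ m') (hmm' : m' < m) (hmN : m ≤ N)
    (h : ℝ → ℝ) (S : Finset ℝ)
    (hcont : ContinuousOn h (Icc (0:ℝ) 1))
    (h0 : h 0 = 0) (h1 : 0 ≤ h 1)
    (hdiff : ∀ t ∈ Ioo (0:ℝ) 1, t ∉ S → DifferentiableAt ℝ h t)
    (hsign : ∀ t ∈ Ioo (0:ℝ) 1, t ∉ S →
      Real.sign (deriv h t) =
        Real.sign (deriv (fun s => H N m s - H N m' s) t)) :
    ∃ tstar ∈ Icc (0:ℝ) 1,
      (∀ t ∈ Icc (0:ℝ) tstar, h t ≤ 0) ∧ (∀ t ∈ Icc tstar (1:ℝ), 0 ≤ h t) :=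
  down_up_down_single_crossing_general N m m' hmm' hmN h S hcont h0 h1 hdiff hsign
end
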